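/- Let q be a prime power and let n be an odd positive integer coprime to q. Then x − 1 is the only SCRIM factor of x^n − 1 over F_{q^2} if and only if for each prime divisor l of n, ord_l(q^2) is even or ord_l(q) is odd. -/

import Mathlib

/-!
A monic irreducible factor `f` of `x^n - 1` over `F = 𝔽_{q²}` is the minimal polynomial of an
element `α` of order `e ∣ n` in a finite extension, and `f†` has the root `α^{-q}`. Hence `f` is
SCRIM iff `α^{-q}` is a Galois conjugate `α^{q^{2i}}` of `α`, i.e. iff `e ∣ q^{2i} + q` for some
`i`, i.e. iff `e ∣ q^m + 1` for some odd `m`. This last property passes to divisors of `e`, so a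
SCRIM factor other than `x - 1` exists iff it holds for some prime `l ∣ n`; for an odd prime `l`
it says exactly that `q` has even and `q²` odd order modulo `l`.
-/

open Polynomial

/-- The reciprocal polynomial `f*(x) = x^(deg f) * f(0)⁻¹ * f(1/x)`. -/
noncomputable def crecip {F : Type*} [Field F] (f : F[X]) : F[X] :=
  C (f.coeff 0)⁻¹ * f.reverse

/-- The conjugate-reciprocal polynomial `f†`, obtained by applying the
conjugation `a ↦ a ^ q` to each coefficient of `f*`. -/
noncomputable def cdagger {F : Type*} [Field F] (q : ℕ) (f : F[X]) : F[X] :=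
  (crecip f).sum fun i a => C (a ^ q) * X ^ i

/-- A polynomial is SCRIM if it is monic, irreducible, and self-conjugate-reciprocal. -/
def IsSCRIM {F : Type*} [Field F] (q : ℕ) (f : F[X]) : Prop :=
  f.Monic ∧ Irreducible f ∧ f = cdagger q f

/-- The set `Ω_{q²,n}` of SCRIM factors of `x^n - 1` over `F = F_{q²}`. -/
def scrimFactors (F : Type*) [Field F] (q n : ℕ) : Set F[X] :=
  {f | IsSCRIM q f ∧ f ∣ X ^ n - 1}

def OddlyGood (e q : ℕ) : Prop :=
  ∃ m, Odd m ∧ e ∣ q ^ m + 1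

lemma OddlyGood.of_dvd {e l q : ℕ} (h : OddlyGood e q) (hl : l ∣ e) : OddlyGood l q :=
  let ⟨m, hm, he⟩ := h
  ⟨m, hm, hl.trans he⟩

lemma oddlyGood_iff_exists_dvd {e q : ℕ} (hcop : e.Coprime q) :
    OddlyGood e q ↔ ∃ i, e ∣ (q ^ 2) ^ i + q := by
  have factor (j : ℕ) : (q ^ 2) ^ (j + 1) + q = q * (q ^ (2 * j + 1) + 1) := by ring
  constructor
  · rintro ⟨m, ⟨j, rfl⟩, he⟩
    exact ⟨j + 1, factor j ▸ he.mul_left q⟩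
  · rintro ⟨_ | j, he⟩
    · exact ⟨1, odd_one, by simpa [add_comm] using he⟩
    · exact ⟨2 * j + 1, odd_two_mul_add_one j, hcop.dvd_of_dvd_mul_left (factor j ▸ he)⟩

lemma exists_odd_pow_eq_neg_one_iff {R : Type*} [CommRing R] [IsDomain R]
    (h : (-1 : R) ≠ 1) (b : R) :
    (∃ m, Odd m ∧ b ^ m = -1) ↔ Even (orderOf b) ∧ Odd (orderOf (b ^ 2)) := by
  constructor
  · rintro ⟨m, hm, hbm⟩
    have hsq : (b ^ m) ^ 2 = 1 := by rw [hbm, neg_one_sq]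
    refine ⟨?_, hm.of_dvd_nat (orderOf_dvd_of_pow_eq_one (by rwa [← pow_mul, pow_mul']))⟩
    by_contra hodd
    have hdvd : orderOf b ∣ 2 * m := orderOf_dvd_of_pow_eq_one (by rwa [pow_mul'])
    have hm1 : b ^ m = 1 := orderOf_dvd_iff_pow_eq_one.mp <|
      (Nat.coprime_two_right.mpr (Nat.not_even_iff_odd.mp hodd)).dvd_of_dvd_mul_left hdvd
    exact h (hbm ▸ hm1)
  · rintro ⟨heven, hodd⟩
    refine ⟨_, hodd, (mul_self_eq_one_iff.mp ?_).resolve_left fun h1 => ?_⟩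
    · rw [← pow_add, ← two_mul, pow_mul, pow_orderOf_eq_one]
    · exact Nat.not_even_iff_odd.mpr hodd
        (even_iff_two_dvd.mpr (heven.two_dvd.trans (orderOf_dvd_of_pow_eq_one h1)))

lemma oddlyGood_iff_orderOf {l q : ℕ} [Fact l.Prime] (hl : l ≠ 2) :
    OddlyGood l q ↔ Even (orderOf (q : ZMod l)) ∧ Odd (orderOf ((q : ZMod l) ^ 2)) := by
  have : Fact (2 < l) := ⟨lt_of_le_of_ne (Fact.out : l.Prime).two_le (Ne.symm hl)⟩
  rw [← exists_odd_pow_eq_neg_one_iff ZMod.neg_one_ne_one]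
  refine exists_congr fun m => and_congr_right fun _ => ?_
  rw [← ZMod.natCast_eq_zero_iff, Nat.cast_add, Nat.cast_pow, Nat.cast_one, add_eq_zero_iff_eq_neg]

section Conjugation

variable {F K : Type*} [Field F] [Field K] [Algebra F K]

lemma monic_crecip {f : F[X]} (h0 : f.coeff 0 ≠ 0) : (crecip f).Monic := by
  rw [Monic, crecip, leadingCoeff_mul, leadingCoeff_C, reverse_leadingCoeff, trailingCoeff,
    natTrailingDegree_eq_zero.mpr (Or.inr h0), inv_mul_cancel₀ h0]

lemma natDegree_crecip {f : F[X]} (h0 : f.coeff 0 ≠ 0) :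
    (crecip f).natDegree = f.natDegree := by
  rw [crecip, natDegree_C_mul (inv_ne_zero h0), reverse_natDegree,
    natTrailingDegree_eq_zero.mpr (Or.inr h0), Nat.sub_zero]

lemma aeval_inv_crecip {f : F[X]} {α : K} (hα : α ≠ 0) (h : aeval α f = 0) :
    aeval α⁻¹ (crecip f) = 0 := by
  have := invertibleOfNonzero hα
  rw [crecip, map_mul]
  refine mul_eq_zero_of_right _ ?_
  rw [aeval_def, ← invOf_eq_inv α, eval₂_reverse_eq_zero_iff, ← aeval_def, h]

-- `q = p ^ k` is written out so that `a ↦ a ^ q` is the ring endomorphism `iterateFrobenius F p k`.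
variable {p k : ℕ} [ExpChar F p]

lemma cdagger_eq_map (f : F[X]) : cdagger (p ^ k) f = (crecip f).map (iterateFrobenius F p k) := by
  simp only [cdagger, Polynomial.map, eval₂_eq_sum, RingHom.coe_comp, Function.comp_apply,
    iterateFrobenius_def]

lemma monic_cdagger {f : F[X]} (h0 : f.coeff 0 ≠ 0) : (cdagger (p ^ k) f).Monic := by
  rw [cdagger_eq_map]
  exact (monic_crecip h0).map _

lemma natDegree_cdagger {f : F[X]} (h0 : f.coeff 0 ≠ 0) :
    (cdagger (p ^ k) f).natDegree = f.natDegree := by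
  rw [cdagger_eq_map, natDegree_map, natDegree_crecip h0]

lemma aeval_inv_pow_cdagger {f : F[X]} {α : K} (hα : α ≠ 0) (h : aeval α f = 0) :
    aeval (α⁻¹ ^ p ^ k) (cdagger (p ^ k) f) = 0 := by
  have := expChar_of_injective_algebraMap (algebraMap F K).injective p
  rw [cdagger_eq_map, aeval_def, eval₂_map, RingHom.iterateFrobenius_comm, ← iterateFrobenius_def,
    ← hom_eval₂, ← aeval_def, aeval_inv_crecip hα h, map_zero]

lemma minpoly_eq_cdagger_iff {α : K} (hint : IsIntegral F α) (hα : α ≠ 0) :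
    minpoly F α = cdagger (p ^ k) (minpoly F α) ↔ aeval (α⁻¹ ^ p ^ k) (minpoly F α) = 0 := by
  refine ⟨fun h => h ▸ aeval_inv_pow_cdagger hα (h ▸ minpoly.aeval F α), fun h => ?_⟩
  have h0 := minpoly.coeff_zero_ne_zero hint hα
  have hconj : minpoly F α = minpoly F (α⁻¹ ^ p ^ k) :=
    minpoly.eq_of_irreducible_of_monic (minpoly.irreducible hint) h (minpoly.monic hint)
  refine (eq_of_monic_of_dvd_of_natDegree_le (minpoly.monic hint) (monic_cdagger h0) ?_
    (natDegree_cdagger h0).le).symm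
  rw [hconj]
  exact minpoly.dvd F _ (hconj ▸ aeval_inv_pow_cdagger hα (minpoly.aeval F α))

end Conjugation

lemma inv_pow_eq_pow_iff_orderOf_dvd {G : Type*} [GroupWithZero G] {α : G} (hα : α ≠ 0)
    (q N : ℕ) : α⁻¹ ^ q = α ^ N ↔ orderOf α ∣ N + q := by
  rw [orderOf_dvd_iff_pow_eq_one, pow_add, mul_eq_one_iff_eq_inv₀ (pow_ne_zero q hα), inv_pow,
    eq_comm]

section FiniteField

variable {F L : Type*} [Field F] [Fintype F] [Field L] [Algebra F L]

lemma aeval_minpoly_eq_zero_iff_exists_pow_card_pow [Finite L] {α β : L} :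
    aeval β (minpoly F α) = 0 ↔ ∃ i, β = α ^ Fintype.card F ^ i := by
  have frob_pow (i : ℕ) (x : L) :
      (FiniteField.frobeniusAlgHom F L ^ i) x = x ^ Fintype.card F ^ i := by
    rw [AlgHom.coe_pow, FiniteField.coe_frobeniusAlgHom, pow_iterate]
  constructor
  · intro h
    obtain ⟨σ, rfl⟩ := minpoly.exists_algEquiv_of_root' (Algebra.IsAlgebraic.isAlgebraic α) h
    obtain ⟨i, hi⟩ := (FiniteField.bijective_frobeniusAlgHom_pow F L).2 σ.toAlgHom
    exact ⟨i, (frob_pow i α ▸ DFunLike.congr_fun hi α).symm⟩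
  · rintro ⟨i, rfl⟩
    rw [← frob_pow, aeval_algHom_apply, minpoly.aeval, map_zero]

variable {p k : ℕ} [ExpChar F p] (hF : Fintype.card F = (p ^ k) ^ 2)
include hF

lemma isSCRIM_minpoly_iff [Finite L] {α : L} (hα : α ≠ 0) (hcop : (orderOf α).Coprime (p ^ k)) :
    IsSCRIM (p ^ k) (minpoly F α) ↔ OddlyGood (orderOf α) (p ^ k) := by
  have hint : IsIntegral F α := Algebra.IsIntegral.isIntegral α
  rw [IsSCRIM, and_iff_right (minpoly.monic hint), and_iff_right (minpoly.irreducible hint),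
    minpoly_eq_cdagger_iff hint hα, aeval_minpoly_eq_zero_iff_exists_pow_card_pow,
    oddlyGood_iff_exists_dvd hcop, hF]
  exact exists_congr fun i => inv_pow_eq_pow_iff_orderOf_dvd hα _ _

lemma X_sub_one_mem_scrimFactors (n : ℕ) : (X - 1 : F[X]) ∈ scrimFactors F (p ^ k) n := by
  refine ⟨?_, sub_one_dvd_pow_sub_one X n⟩
  rw [← minpoly.one F F, isSCRIM_minpoly_iff (L := F) hF one_ne_zero (by simp)]
  exact ⟨1, odd_one, by simp⟩

lemma exists_prime_oddlyGood_of_mem_scrimFactors {n : ℕ} (hn : 0 < n) (hcop : n.Coprime (p ^ k))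
    {f : F[X]} (hf : f ∈ scrimFactors F (p ^ k) n) (hne : f ≠ X - 1) :
    ∃ l, l.Prime ∧ l ∣ n ∧ OddlyGood l (p ^ k) := by
  obtain ⟨hscrim, hdvd⟩ := hf
  have hf0 := hscrim.2.1.ne_zero
  have := Fact.mk hscrim.2.1
  have := (AdjoinRoot.powerBasis hf0).finite
  have := Module.finite_of_finite F (M := AdjoinRoot f)
  set α := AdjoinRoot.root f
  have hminpoly : minpoly F α = f := by
    rw [AdjoinRoot.minpoly_root hf0, hscrim.1.leadingCoeff, inv_one, C_1, mul_one]
  have hαn : α ^ n = 1 := by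
    have := minpoly.dvd_iff.mp (hminpoly ▸ hdvd)
    rwa [map_sub, map_pow, aeval_X, map_one, sub_eq_zero] at this
  have hα0 : α ≠ 0 := by
    intro h
    simp [h, zero_pow hn.ne'] at hαn
  have he : orderOf α ∣ n := orderOf_dvd_of_pow_eq_one hαn
  have hgood := (isSCRIM_minpoly_iff hF hα0 (hcop.coprime_dvd_left he)).mp (by rwa [hminpoly])
  have he1 : orderOf α ≠ 1 := fun h => hne <| by
    rw [← hminpoly, orderOf_eq_one_iff.mp h, minpoly.one]
  exact ⟨_, Nat.minFac_prime he1, (Nat.minFac_dvd _).trans he, hgood.of_dvd (Nat.minFac_dvd _)⟩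

lemma exists_mem_scrimFactors_ne_of_oddlyGood {n l : ℕ} (hcop : n.Coprime (p ^ k))
    (hl : l.Prime) (hln : l ∣ n) (hgood : OddlyGood l (p ^ k)) :
    ∃ f ∈ scrimFactors F (p ^ k) n, f ≠ X - 1 := by
  have hlq : l.Coprime (p ^ k) := hcop.coprime_dvd_left hln
  have : NeZero (l : F) := ⟨fun h0 => CharP.ringChar_ne_one <|
    ((hlq.pow_right 2).coprime_dvd_left (ringChar.dvd h0)).eq_one_of_dvd
      (hF ▸ ringChar.dvd (FiniteField.cast_card_eq_zero F))⟩
  have := NeZero.of_neZero_natCast F (n := l)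
  have := IsCyclotomicExtension.finiteDimensional {l} F (CyclotomicField l F)
  have := Module.finite_of_finite F (M := CyclotomicField l F)
  set ζ := IsCyclotomicExtension.zeta l F (CyclotomicField l F)
  have hζ : IsPrimitiveRoot ζ l := IsCyclotomicExtension.zeta_spec l F _
  have hord : orderOf ζ = l := hζ.eq_orderOf.symm
  have hζn : aeval ζ (X ^ n - 1 : F[X]) = 0 := by
    simp [(hζ.pow_eq_one_iff_dvd n).mpr hln]
  refine ⟨minpoly F ζ, ⟨?_, minpoly.dvd F ζ hζn⟩, fun h => hζ.ne_one hl.one_lt ?_⟩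
  · rw [isSCRIM_minpoly_iff hF (hζ.ne_zero hl.ne_zero) (by rwa [hord]), hord]
    exact hgood
  · simpa [h, sub_eq_zero] using minpoly.aeval F ζ

lemma scrimFactors_eq_singleton_iff {n : ℕ} (hn : 0 < n) (hcop : n.Coprime (p ^ k)) :
    scrimFactors F (p ^ k) n = {X - 1} ↔ ∀ l, l.Prime → l ∣ n → ¬ OddlyGood l (p ^ k) := by
  rw [Set.eq_singleton_iff_unique_mem, and_iff_right (X_sub_one_mem_scrimFactors hF n)]
  constructor
  · intro huniq l hl hln hgood
    obtain ⟨f, hf, hne⟩ := exists_mem_scrimFactors_ne_of_oddlyGood hF hcop hl hln hgood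
    exact hne (huniq f hf)
  · intro hbad f hf
    by_contra hne
    obtain ⟨l, hl, hln, hgood⟩ := exists_prime_oddlyGood_of_mem_scrimFactors hF hn hcop hf hne
    exact hbad l hl hln hgood

end FiniteField

theorem stmt4 {q n : ℕ} (hq : IsPrimePow q)
    {F : Type*} [Field F] [Fintype F] (hF : Fintype.card F = q ^ 2)
    (hn : Odd n) (hgcd : Nat.Coprime n q) :
    scrimFactors F q n = {X - 1} ↔
      ∀ l : ℕ, l.Prime → l ∣ n →
        Even (orderOf ((q : ZMod l) ^ 2)) ∨ Odd (orderOf (q : ZMod l)) := by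
  obtain ⟨p, k, hp, -, rfl⟩ := hq
  have := Fact.mk (Nat.prime_iff.mpr hp)
  have : CharP F p := charP_of_card_eq_prime_pow (hF.trans (pow_mul p k 2).symm)
  rw [scrimFactors_eq_singleton_iff hF hn.pos hgcd]
  refine forall₃_congr fun l hl hln => ?_
  have := Fact.mk hl
  have hl2 : l ≠ 2 := fun h => Nat.not_even_iff_odd.mpr (hn.of_dvd_nat hln) (h ▸ even_two)
  rw [oddlyGood_iff_orderOf hl2, not_and_or, Nat.not_even_iff_odd, Nat.not_odd_iff_even, or_comm]
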